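/- For every integer n ≥ 3, the direct product of cycle graphs C_8 × C_n has total chromatic number 5. -/

import Mathlib

open SimpleGraph

/-- Tensor (direct / categorical) product of simple graphs:
`(u, v)` is adjacent to `(u', v')` iff `u ~ u'` in `G` and `v ~ v'` in `H`. -/
def tensorProd {V W : Type*} (G : SimpleGraph V) (H : SimpleGraph W) :
    SimpleGraph (V × W) where
  Adj x y := G.Adj x.1 y.1 ∧ H.Adj x.2 y.2
  symm := ⟨fun _ _ h => ⟨h.1.symm, h.2.symm⟩⟩
  loopless := ⟨fun x h => G.loopless.irrefl x.1 h.1⟩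

instance {V W : Type*} (G : SimpleGraph V) (H : SimpleGraph W)
    [DecidableRel G.Adj] [DecidableRel H.Adj] : DecidableRel (tensorProd G H).Adj :=
  fun x y => inferInstanceAs (Decidable (G.Adj x.1 y.1 ∧ H.Adj x.2 y.2))

/-- `G` has a proper total coloring with `k` colors: adjacent vertices get distinct
colors, distinct incident edges get distinct colors, and each edge gets a color
distinct from those of both of its endpoints. -/
def HasTotalColoring {V : Type*} (G : SimpleGraph V) (k : ℕ) : Prop :=
  ∃ (cv : V → Fin k) (ce : Sym2 V → Fin k),
    (∀ u v, G.Adj u v → cv u ≠ cv v) ∧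
    (∀ u v w, G.Adj u v → G.Adj u w → v ≠ w → ce s(u, v) ≠ ce s(u, w)) ∧
    (∀ u v, G.Adj u v → ce s(u, v) ≠ cv u ∧ ce s(u, v) ≠ cv v)

/-- The total chromatic number: the least `k` such that `G` has a `k`-total coloring. -/
noncomputable def totalChromaticNumber {V : Type*} (G : SimpleGraph V) : ℕ :=
  sInf {k | HasTotalColoring G k}

/-!
A vertex of degree `Δ` needs `Δ + 1` colors for itself and its incident edges, and every vertex
of `C_8 × C_n` has degree `2 · 2 = 4`; so five colors are needed. Conversely, a 5-total coloring
of `C_8 × C_n` can be chosen independent of the `C_n` coordinate: color the vertex `(i, j)` by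
`vertex i` and the edge from `(i, j)` to `(i', j + 1)` by `arc i i'`. The conditions on
`(vertex, arc)` then only involve `C_8`, and a suitable pair is checked by `decide`.
-/

open Finset

variable {V W : Type*}

lemma HasTotalColoring.degree_add_one_le {G : SimpleGraph V} {k : ℕ} (hG : HasTotalColoring G k)
    (v : V) [Fintype (G.neighborSet v)] : G.degree v + 1 ≤ k := by
  obtain ⟨cv, ce, -, hedge, hvert⟩ := hG
  let f : Option (G.neighborSet v) → Fin k := fun o => o.elim (cv v) fun w => ce s(v, w)
  have hf : Function.Injective f := by
    rintro (_ | ⟨w, hw⟩) (_ | ⟨w', hw'⟩) h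
    · rfl
    · exact absurd h.symm (hvert v w' hw').1
    · exact absurd h (hvert v w hw).1
    · by_contra hne
      exact hedge v w w' hw hw' (fun hww' => hne (by subst hww'; rfl)) h
  simpa [← card_neighborSet_eq_degree] using Fintype.card_le_of_injective f hf

lemma tensorProd_degree [Fintype V] [Fintype W] {G : SimpleGraph V} {H : SimpleGraph W}
    [DecidableRel G.Adj] [DecidableRel H.Adj] (u : V) (w : W) :
    (tensorProd G H).degree (u, w) = G.degree u * H.degree w := by
  have : (tensorProd G H).neighborFinset (u, w) = G.neighborFinset u ×ˢ H.neighborFinset w := by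
    ext ⟨v, x⟩
    simp only [mem_neighborFinset, mem_product]
    rfl
  rw [← card_neighborFinset_eq_degree, this, card_product, card_neighborFinset_eq_degree,
    card_neighborFinset_eq_degree]

lemma Fin.sub_one_ne_add_one {n : ℕ} (j : Fin (n + 3)) : j - 1 ≠ j + 1 := by
  simp only [ne_eq, sub_eq_iff_eq_add, add_assoc j, left_eq_add]
  exact ne_of_beq_false rfl

lemma cycleGraph_adj_iff {n : ℕ} {j j' : Fin (n + 2)} :
    (cycleGraph (n + 2)).Adj j j' ↔ j' = j - 1 ∨ j' = j + 1 := by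
  rw [← mem_neighborSet, cycleGraph_neighborSet]
  rfl

/-- The edge joining `(u, j)` to `(v, j + 1)` in `G × C_n` is to receive the color `arc u v`.
So the edges at `(u, j)` carry the colors `arc u v` (towards `j + 1`) and `arc v u`
(towards `j - 1`), `v` ranging over the neighbours of `u`. -/
structure ArcTotalColoring (G : SimpleGraph V) (k : ℕ) where
  vertex : V → Fin k
  arc : V → V → Fin k
  vertex_ne : ∀ ⦃u v⦄, G.Adj u v → vertex u ≠ vertex v
  arc_ne_vertex : ∀ ⦃u v⦄, G.Adj u v → arc u v ≠ vertex u ∧ arc u v ≠ vertex v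
  out_ne_out : ∀ ⦃u v w⦄, G.Adj u v → G.Adj u w → v ≠ w → arc u v ≠ arc u w
  in_ne_in : ∀ ⦃u v w⦄, G.Adj u v → G.Adj u w → v ≠ w → arc v u ≠ arc w u
  out_ne_in : ∀ ⦃u v w⦄, G.Adj u v → G.Adj u w → arc u v ≠ arc w u

namespace ArcTotalColoring

variable {G : SimpleGraph V} {k n : ℕ} (c : ArcTotalColoring G k)

/-- The last branch only concerns non-edges; it is there to make the function symmetric. -/
def edgeColor (x y : V × Fin (n + 3)) : Fin k :=
  if y.2 = x.2 + 1 then c.arc x.1 y.1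
  else if x.2 = y.2 + 1 then c.arc y.1 x.1
  else min (c.arc x.1 y.1) (c.arc y.1 x.1)

lemma edgeColor_comm (x y : V × Fin (n + 3)) : c.edgeColor x y = c.edgeColor y x := by
  have h : ¬(y.2 = x.2 + 1 ∧ x.2 = y.2 + 1) := fun ⟨hy, hx⟩ =>
    Fin.sub_one_ne_add_one x.2 (hy ▸ (eq_sub_of_add_eq hx.symm).symm)
  unfold edgeColor
  split_ifs <;> first | rfl | exact absurd ⟨‹_›, ‹_›⟩ h | exact min_comm _ _

def edgeColoring : Sym2 (V × Fin (n + 3)) → Fin k :=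
  Sym2.lift ⟨c.edgeColor, c.edgeColor_comm⟩

lemma edgeColoring_add_one (u v : V) (j : Fin (n + 3)) :
    c.edgeColoring s((u, j), (v, j + 1)) = c.arc u v :=
  if_pos rfl

lemma edgeColoring_sub_one (u v : V) (j : Fin (n + 3)) :
    c.edgeColoring s((u, j), (v, j - 1)) = c.arc v u := by
  rw [edgeColoring, Sym2.lift_mk]
  exact (if_neg (Fin.sub_one_ne_add_one j)).trans (if_pos (sub_add_cancel j 1).symm)

theorem hasTotalColoring_tensorProd_cycleGraph (c : ArcTotalColoring G k) :
    HasTotalColoring (tensorProd G (cycleGraph (n + 3))) k := by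
  refine ⟨fun x => c.vertex x.1, c.edgeColoring, fun x y h => c.vertex_ne h.1, ?_, ?_⟩
  · rintro ⟨u, j⟩ ⟨v, j₁⟩ ⟨w, j₂⟩ ⟨huv, hj₁⟩ ⟨huw, hj₂⟩ hne
    rcases cycleGraph_adj_iff.1 hj₁ with rfl | rfl <;>
      rcases cycleGraph_adj_iff.1 hj₂ with rfl | rfl
    · rw [edgeColoring_sub_one, edgeColoring_sub_one]
      exact c.in_ne_in huv huw fun h => hne (h ▸ rfl)
    · rw [edgeColoring_sub_one, edgeColoring_add_one]
      exact (c.out_ne_in huw huv).symm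
    · rw [edgeColoring_add_one, edgeColoring_sub_one]
      exact c.out_ne_in huv huw
    · rw [edgeColoring_add_one, edgeColoring_add_one]
      exact c.out_ne_out huv huw fun h => hne (h ▸ rfl)
  · rintro ⟨u, j⟩ ⟨v, j'⟩ ⟨huv, hj⟩
    rcases cycleGraph_adj_iff.1 hj with rfl | rfl
    · rw [edgeColoring_sub_one]
      exact (c.arc_ne_vertex huv.symm).symm
    · rw [edgeColoring_add_one]
      exact c.arc_ne_vertex huv

end ArcTotalColoring

def cycleGraphEightArcTotalColoring : ArcTotalColoring (cycleGraph 8) 5 where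
  vertex := ![0, 1, 2, 0, 3, 2, 1, 3]
  arc i i' := if i' = i + 1 then ![2, 0, 1, 2, 0, 3, 0, 4] i else ![1, 3, 4, 3, 4, 1, 4, 2] i
  vertex_ne := by decide
  arc_ne_vertex := by decide
  out_ne_out := by decide
  in_ne_in := by decide
  out_ne_in := by decide

theorem c8_tensor_cn (n : ℕ) (hn : 3 ≤ n) :
    totalChromaticNumber (tensorProd (cycleGraph 8) (cycleGraph n)) = 5 := by
  obtain ⟨m, rfl⟩ : ∃ m, n = m + 3 := ⟨n - 3, by omega⟩
  have hcol : HasTotalColoring (tensorProd (cycleGraph 8) (cycleGraph (m + 3))) 5 :=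
    cycleGraphEightArcTotalColoring.hasTotalColoring_tensorProd_cycleGraph
  refine le_antisymm (Nat.sInf_le hcol) (le_csInf ⟨5, hcol⟩ fun k hk => ?_)
  have hdeg := hk.degree_add_one_le (0, 0)
  rwa [tensorProd_degree, cycleGraph_degree_three_le, cycleGraph_degree_three_le] at hdeg
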